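/- Let X ∈ ℝ^{N×N} be symmetric positive semidefinite of rank r with eigenvalues λ₁ ≥ ⋯ ≥ λ_r > 0, let 1 ≤ k ≤ r, let W_k, Λ_k, U* = W_k Λ_k^{1/2} be as usual, and set L = ‖U*U*ᵀ‖_F. Let B₁,…,B_M ∈ ℝ^{N×N}, set A_m = (B_m + B_mᵀ)/2, and suppose that for every Z ∈ ℝ^{N×N} with rank(Z) ≤ r+k one has (1−δ)‖Z‖_F² ≤ Σ_{m=1}^M ⟨B_m, Z⟩² ≤ (1+δ)‖Z‖_F², where ⟨·,·⟩ is the trace inner product. Let ε > 0 and suppose δ ≤ ε / (2 √(8/7) k^{1/4} ((8/7)L + ‖X‖_F) L^{1/2}). Then for every U ∈ ℝ^{N×k} with full column rank and ‖UUᵀ‖_F ≤ (8/7)L, one has ‖(Σ_{m=1}^M ⟨A_m, UUᵀ − X⟩ A_m) U − (UUᵀ − X)U‖_F ≤ ε/2. -/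

import Mathlib

/-!
Write `E = UUᵀ - X` and `D = 𝒜*𝒜(E) - E`, so that the claim bounds `‖DU‖`. Since `A m` is the
symmetric part of `B m` and `E` is symmetric, `‖DU‖² = ⟨D, DU Uᵀ⟩ = β(E, sym(DU Uᵀ))`, where
`β(Y, Z) = ∑ ⟨B m, Y⟩⟨B m, Z⟩ - ⟨Y, Z⟩` is the RIP defect.

For a symmetric bilinear form, `|β(P, P)| ≤ c‖P‖²` on the plane spanned by `P` and `Q` gives
`|β(P, Q)| ≤ c‖P‖‖Q‖`, by polarization after rescaling `P` and `Q` to equal norm. On a plane spanned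
by `UUᵀ` (or `X`) and a rank-one `vvᵀ` every matrix has rank at most `r + k`, so RIP yields
`|β(E, vvᵀ)| ≤ δ(‖UUᵀ‖ + ‖X‖)|v|²`. Summing over columns bounds `β(E, PPᵀ)` by
`δ(‖UUᵀ‖ + ‖X‖)‖P‖²`, and polarizing once more, now in `(DU, U)`, gives
`‖DU‖ ≤ δ(‖UUᵀ‖ + ‖X‖)‖U‖`. Finally `‖U‖² = tr UᵀU ≤ √k ‖UᵀU‖ = √k ‖UUᵀ‖`.
-/

open Matrix

/-- Frobenius norm of a real matrix. -/
noncomputable def frob {m n : Type*} [Fintype m] [Fintype n] (M : Matrix m n ℝ) : ℝ :=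
  Real.sqrt (∑ i, ∑ j, (M i j) ^ 2)

/-- Trace (entrywise) inner product of two real matrices. -/
noncomputable def mip {m n : Type*} [Fintype m] [Fintype n] (A B : Matrix m n ℝ) : ℝ :=
  ∑ i, ∑ j, A i j * B i j
section FrobeniusInner

variable {m n : Type*} [Fintype m] [Fintype n]

lemma mip_comm (A B : Matrix m n ℝ) : mip A B = mip B A := by
  simp only [mip, mul_comm]

lemma mip_add_left (A B C : Matrix m n ℝ) : mip (A + B) C = mip A C + mip B C := by
  simp only [mip, Matrix.add_apply, add_mul, Finset.sum_add_distrib]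

lemma mip_smul_left (s : ℝ) (A B : Matrix m n ℝ) : mip (s • A) B = s * mip A B := by
  simp only [mip, Matrix.smul_apply, smul_eq_mul, Finset.mul_sum, mul_assoc]

lemma mip_add_right (A B C : Matrix m n ℝ) : mip A (B + C) = mip A B + mip A C := by
  rw [mip_comm, mip_add_left, mip_comm B, mip_comm C]

lemma mip_smul_right (s : ℝ) (A B : Matrix m n ℝ) : mip A (s • B) = s * mip A B := by
  rw [mip_comm, mip_smul_left, mip_comm]

noncomputable def mipBilin : LinearMap.BilinForm ℝ (Matrix m n ℝ) :=
  LinearMap.mk₂ ℝ mip mip_add_left mip_smul_left mip_add_right mip_smul_right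

@[simp] lemma mipBilin_apply (A B : Matrix m n ℝ) : mipBilin A B = mip A B := rfl

lemma mip_sub_left (A B C : Matrix m n ℝ) : mip (A - B) C = mip A C - mip B C := by
  simp only [← mipBilin_apply, map_sub, LinearMap.sub_apply]

lemma mip_sum_left {ι : Type*} (s : Finset ι) (f : ι → Matrix m n ℝ) (C : Matrix m n ℝ) :
    mip (∑ i ∈ s, f i) C = ∑ i ∈ s, mip (f i) C := by
  rw [← mipBilin_apply, map_sum, LinearMap.sum_apply]
  rfl

lemma mip_transpose (A B : Matrix m n ℝ) : mip Aᵀ Bᵀ = mip A B := by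
  rw [mip, Finset.sum_comm]; rfl

lemma frob_nonneg (A : Matrix m n ℝ) : 0 ≤ frob A := Real.sqrt_nonneg _

lemma frob_sq (A : Matrix m n ℝ) : frob A ^ 2 = mip A A := by
  rw [frob, Real.sq_sqrt (by positivity)]
  simp only [mip, sq]

lemma frob_eq_zero {A : Matrix m n ℝ} : frob A = 0 ↔ A = 0 := by
  rw [frob, Real.sqrt_eq_zero (by positivity)]
  simp [Finset.sum_eq_zero_iff_of_nonneg, Finset.sum_nonneg, sq_nonneg, ← Matrix.ext_iff]

@[simp] lemma frob_zero : frob (0 : Matrix m n ℝ) = 0 := frob_eq_zero.mpr rfl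

lemma frob_smul_add_smul_sq (s t : ℝ) (A B : Matrix m n ℝ) :
    frob (s • A + t • B) ^ 2 = s ^ 2 * frob A ^ 2 + 2 * s * t * mip A B + t ^ 2 * frob B ^ 2 := by
  rw [frob_sq, frob_sq, frob_sq, ← mipBilin_apply]
  simp only [map_add, map_smul, LinearMap.add_apply, LinearMap.smul_apply, smul_eq_mul,
    mipBilin_apply, mip_comm B A]
  ring

theorem abs_apply_le_of_abs_apply_self_le (β : LinearMap.BilinForm ℝ (Matrix m n ℝ))
    (hβ : ∀ P Q, β P Q = β Q P) {c : ℝ} {P Q : Matrix m n ℝ}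
    (h : ∀ s t : ℝ, |β (s • P + t • Q) (s • P + t • Q)| ≤ c * frob (s • P + t • Q) ^ 2) :
    |β P Q| ≤ c * frob P * frob Q := by
  rcases eq_or_ne P 0 with rfl | hP
  · simp
  rcases eq_or_ne Q 0 with rfl | hQ
  · simp
  have hP' : 0 < frob P := (frob_nonneg P).lt_of_ne' (frob_eq_zero.not.mpr hP)
  have hQ' : 0 < frob Q := (frob_nonneg Q).lt_of_ne' (frob_eq_zero.not.mpr hQ)
  set t := Real.sqrt (frob Q / frob P)
  have ht : 0 < t := Real.sqrt_pos.mpr (div_pos hQ' hP')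
  have ht2 : t ^ 2 = frob Q / frob P := Real.sq_sqrt (div_pos hQ' hP').le
  have polar : 4 * β P Q = β (t • P + t⁻¹ • Q) (t • P + t⁻¹ • Q)
      - β (t • P + (-t⁻¹) • Q) (t • P + (-t⁻¹) • Q) := by
    simp only [map_add, map_smul, LinearMap.add_apply, LinearMap.smul_apply, smul_eq_mul, hβ Q P]
    field_simp
    ring
  have para : frob (t • P + t⁻¹ • Q) ^ 2 + frob (t • P + (-t⁻¹) • Q) ^ 2
      = 4 * frob P * frob Q := by
    rw [frob_smul_add_smul_sq, frob_smul_add_smul_sq, neg_sq, inv_pow, ht2]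
    field_simp
    ring
  have key : 4 * |β P Q| ≤ c * (4 * frob P * frob Q) := by
    calc 4 * |β P Q| = |4 * β P Q| := by rw [abs_mul, abs_of_pos (four_pos : (0:ℝ) < 4)]
      _ ≤ |β (t • P + t⁻¹ • Q) (t • P + t⁻¹ • Q)|
          + |β (t • P + (-t⁻¹) • Q) (t • P + (-t⁻¹) • Q)| := polar ▸ abs_sub _ _
      _ ≤ c * (4 * frob P * frob Q) := by
        rw [← para, mul_add]
        exact add_le_add (h _ _) (h _ _)
  linarith

lemma abs_mip_le (A B : Matrix m n ℝ) : |mip A B| ≤ frob A * frob B := by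
  simpa using abs_apply_le_of_abs_apply_self_le mipBilin mip_comm (c := 1)
    fun s t => by rw [mipBilin_apply, ← frob_sq, one_mul, abs_of_nonneg (sq_nonneg _)]

end FrobeniusInner

section MatrixProducts

variable {m n p : Type*} [Fintype m] [Fintype n] [Fintype p]

lemma mip_mul_right (P : Matrix m n ℝ) (Q : Matrix n p ℝ) (G : Matrix m p ℝ) :
    mip (P * Q) G = mip P (G * Qᵀ) := by
  simp only [mip, mul_apply, transpose_apply, Finset.sum_mul, Finset.mul_sum]
  refine Finset.sum_congr rfl fun i _ => ?_
  rw [Finset.sum_comm]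
  exact Finset.sum_congr rfl fun l _ => Finset.sum_congr rfl fun j _ => by ring

lemma mip_mul_left (P : Matrix m n ℝ) (Q : Matrix n p ℝ) (G : Matrix m p ℝ) :
    mip (P * Q) G = mip Q (Pᵀ * G) := by
  rw [← mip_transpose, transpose_mul, mip_mul_right, ← mip_transpose, transpose_mul,
    transpose_transpose, transpose_transpose, transpose_transpose]

lemma frob_transpose_mul_self (U : Matrix m n ℝ) : frob (Uᵀ * U) = frob (U * Uᵀ) := by
  have h : mip (Uᵀ * U) (Uᵀ * U) = mip (U * Uᵀ) (U * Uᵀ) := by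
    rw [mip_mul_right, mip_comm, Matrix.mul_assoc, mip_mul_left, transpose_transpose]
  rw [← Real.sqrt_sq (frob_nonneg (Uᵀ * U)), ← Real.sqrt_sq (frob_nonneg (U * Uᵀ)),
    frob_sq, frob_sq, h]

lemma frob_one [DecidableEq n] : frob (1 : Matrix n n ℝ) = Real.sqrt (Fintype.card n) := by
  simp [frob, one_apply]

lemma frob_sq_le_sqrt_card_mul_frob_mul_transpose (U : Matrix m n ℝ) :
    frob U ^ 2 ≤ Real.sqrt (Fintype.card n) * frob (U * Uᵀ) := by
  classical
  calc frob U ^ 2 = mip (Uᵀ * U) 1 := by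
        rw [frob_sq, mip_mul_right, Matrix.one_mul, ← mip_transpose]
    _ ≤ frob (Uᵀ * U) * frob (1 : Matrix n n ℝ) := (le_abs_self _).trans (abs_mip_le _ _)
    _ = Real.sqrt (Fintype.card n) * frob (U * Uᵀ) := by
        rw [frob_one, frob_transpose_mul_self, mul_comm]

lemma frob_le_rpow_mul_sqrt_frob_mul_transpose (U : Matrix m n ℝ) :
    frob U ≤ (Fintype.card n : ℝ) ^ ((1 : ℝ) / 4) * Real.sqrt (frob (U * Uᵀ)) := by
  have hsqrt : Real.sqrt (Real.sqrt (Fintype.card n)) = (Fintype.card n : ℝ) ^ ((1 : ℝ) / 4) := by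
    rw [Real.sqrt_eq_rpow, Real.sqrt_eq_rpow, ← Real.rpow_mul (Nat.cast_nonneg _)]
    norm_num
  calc frob U = Real.sqrt (frob U ^ 2) := (Real.sqrt_sq (frob_nonneg U)).symm
    _ ≤ Real.sqrt (Real.sqrt (Fintype.card n) * frob (U * Uᵀ)) :=
        Real.sqrt_le_sqrt (frob_sq_le_sqrt_card_mul_frob_mul_transpose U)
    _ = _ := by rw [Real.sqrt_mul (Real.sqrt_nonneg _), hsqrt]

end MatrixProducts

namespace Matrix

variable {m n K : Type*} [Fintype n] [Field K]

lemma rank_smul_le (s : K) (A : Matrix m n K) : (s • A).rank ≤ A.rank := by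
  rw [rank, rank, mulVecLin, map_smul]
  exact Submodule.finrank_mono (LinearMap.range_smul_le_range _ _)

lemma rank_add_le (A B : Matrix m n K) : (A + B).rank ≤ A.rank + B.rank := by
  rw [rank, rank, rank, mulVecLin_add]
  calc _ ≤ Module.finrank K ↥(LinearMap.range A.mulVecLin ⊔ LinearMap.range B.mulVecLin) :=
        Submodule.finrank_mono (LinearMap.range_add_le _ _)
    _ ≤ _ := Submodule.finrank_add_le_finrank_add_finrank _ _

lemma rank_smul_add_smul_le (s t : K) (A B : Matrix m n K) :
    (s • A + t • B).rank ≤ A.rank + B.rank :=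
  (rank_add_le _ _).trans (add_le_add (rank_smul_le _ _) (rank_smul_le _ _))

end Matrix

section Sensing

variable {m n ι : Type*} [Fintype m] [Fintype n] [Fintype ι]

noncomputable def sensingError (B : ι → Matrix m n ℝ) : LinearMap.BilinForm ℝ (Matrix m n ℝ) :=
  LinearMap.mk₂ ℝ (fun Y Z => ∑ i, mip (B i) Y * mip (B i) Z - mip Y Z)
    (fun _ _ _ => by
      simp only [mip_add_left, mip_add_right, add_mul, Finset.sum_add_distrib]; ring)
    (fun _ _ _ => by
      simp only [mip_smul_left, mip_smul_right, smul_eq_mul, mul_sub, Finset.mul_sum, mul_assoc])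
    (fun _ _ _ => by simp only [mip_add_right, mul_add, Finset.sum_add_distrib]; ring)
    (fun _ _ _ => by
      simp only [mip_smul_right, smul_eq_mul, mul_sub, Finset.mul_sum, mul_left_comm])

lemma sensingError_apply (B : ι → Matrix m n ℝ) (Y Z : Matrix m n ℝ) :
    sensingError B Y Z = ∑ i, mip (B i) Y * mip (B i) Z - mip Y Z := rfl

lemma sensingError_comm (B : ι → Matrix m n ℝ) (Y Z : Matrix m n ℝ) :
    sensingError B Y Z = sensingError B Z Y := by
  simp only [sensingError_apply, mul_comm (mip (B _) Y), mip_comm Y]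

def HasRIP (B : ι → Matrix m n ℝ) (R : ℕ) (δ : ℝ) : Prop :=
  ∀ Z : Matrix m n ℝ, Z.rank ≤ R →
    (1 - δ) * frob Z ^ 2 ≤ ∑ i, mip (B i) Z ^ 2 ∧ ∑ i, mip (B i) Z ^ 2 ≤ (1 + δ) * frob Z ^ 2

theorem HasRIP.abs_sensingError_le {B : ι → Matrix m n ℝ} {R : ℕ} {δ : ℝ} (hB : HasRIP B R δ)
    {Y Z : Matrix m n ℝ} (hrank : ∀ s t : ℝ, (s • Y + t • Z).rank ≤ R) :
    |sensingError B Y Z| ≤ δ * frob Y * frob Z :=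
  abs_apply_le_of_abs_apply_self_le _ (sensingError_comm B) fun s t => by
    obtain ⟨hlow, hhigh⟩ := hB _ (hrank s t)
    rw [sensingError_apply, ← frob_sq, abs_le]
    simp only [← sq]
    constructor <;> linarith

end Sensing

section SymmetricPart

variable {n : Type*}

noncomputable def symPart (Z : Matrix n n ℝ) : Matrix n n ℝ := (1 / 2 : ℝ) • (Z + Zᵀ)

lemma symPart_eq_self {E : Matrix n n ℝ} (hE : Eᵀ = E) : symPart E = E := by
  rw [symPart, hE, ← two_smul ℝ E, smul_smul]
  norm_num

lemma symPart_transpose (Z : Matrix n n ℝ) : symPart Zᵀ = symPart Z := by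
  rw [symPart, symPart, transpose_transpose, add_comm]

end SymmetricPart

section SymmetricMeasurements

variable {n k ι : Type*} [Fintype n] [Fintype k] [Fintype ι]

lemma mip_symPart_left (A Z : Matrix n n ℝ) : mip (symPart A) Z = mip A (symPart Z) := by
  have h : mip Aᵀ Z = mip A Zᵀ := by rw [← mip_transpose, transpose_transpose]
  rw [symPart, symPart, mip_smul_left, mip_smul_right, mip_add_left, mip_add_right, h]

lemma frob_vecMulVec_self (v : n → ℝ) : frob (vecMulVec v v) = ∑ i, v i ^ 2 := by
  rw [frob, ← Real.sqrt_sq (by positivity : 0 ≤ ∑ i, v i ^ 2), sq, Finset.sum_mul_sum]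
  simp only [vecMulVec_apply, mul_pow]

theorem HasRIP.abs_sensingError_vecMulVec_le {B : ι → Matrix n n ℝ} {R : ℕ} {δ : ℝ}
    (hB : HasRIP B R δ) {Y : Matrix n n ℝ} (hY : Y.rank + 1 ≤ R) (v : n → ℝ) :
    |sensingError B Y (vecMulVec v v)| ≤ δ * frob Y * ∑ i, v i ^ 2 := by
  rw [← frob_vecMulVec_self]
  refine hB.abs_sensingError_le fun s t => ?_
  have := rank_vecMulVec_le (R := ℝ) v v
  exact (rank_smul_add_smul_le s t _ _).trans (by omega)

lemma abs_apply_mul_transpose_le (φ : Matrix n n ℝ →ₗ[ℝ] ℝ) {c : ℝ}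
    (hφ : ∀ v, |φ (vecMulVec v v)| ≤ c * ∑ i, v i ^ 2) (P : Matrix n k ℝ) :
    |φ (P * Pᵀ)| ≤ c * frob P ^ 2 := by
  have hcols : P * Pᵀ = ∑ j, vecMulVec (fun i => P i j) (fun i => P i j) := by
    ext; simp [mul_apply, vecMulVec_apply, Matrix.sum_apply]
  have hfrob : frob P ^ 2 = ∑ j, ∑ i, P i j ^ 2 := by
    rw [frob, Real.sq_sqrt (by positivity), Finset.sum_comm]
  rw [hcols, map_sum, hfrob, Finset.mul_sum]
  exact (Finset.abs_sum_le_sum_abs _ _).trans (Finset.sum_le_sum fun j _ => hφ _)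

noncomputable def symMulTransposeForm (φ : Matrix n n ℝ →ₗ[ℝ] ℝ) :
    LinearMap.BilinForm ℝ (Matrix n k ℝ) :=
  LinearMap.mk₂ ℝ (fun P Q => φ (symPart (P * Qᵀ)))
    (fun _ _ _ => by
      simp only [symPart, Matrix.add_mul, transpose_add, smul_add, map_add]; abel)
    (fun _ _ _ => by
      simp only [symPart, Matrix.smul_mul, transpose_smul, ← smul_add, map_smul, smul_eq_mul]; ring)
    (fun _ _ _ => by simp only [symPart, transpose_add, Matrix.mul_add, smul_add, map_add]; abel)
    (fun _ _ _ => by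
      simp only [symPart, transpose_smul, Matrix.mul_smul, ← smul_add, map_smul, smul_eq_mul]; ring)

lemma abs_apply_symPart_mul_transpose_le (φ : Matrix n n ℝ →ₗ[ℝ] ℝ) {c : ℝ}
    (hφ : ∀ v, |φ (vecMulVec v v)| ≤ c * ∑ i, v i ^ 2) (P Q : Matrix n k ℝ) :
    |φ (symPart (P * Qᵀ))| ≤ c * frob P * frob Q := by
  refine abs_apply_le_of_abs_apply_self_le (symMulTransposeForm φ) (fun P Q => ?_) fun s t => ?_
  · change φ (symPart (P * Qᵀ)) = φ (symPart (Q * Pᵀ))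
    rw [← symPart_transpose, transpose_mul, transpose_transpose]
  · change |φ (symPart (_ * _ᵀ))| ≤ _
    rw [symPart_eq_self (by rw [transpose_mul, transpose_transpose])]
    exact abs_apply_mul_transpose_le φ hφ _

lemma mip_sum_smul_sub_eq_sensingError {B A : ι → Matrix n n ℝ} (hA : ∀ i, A i = symPart (B i))
    {E : Matrix n n ℝ} (hE : Eᵀ = E) (T : Matrix n n ℝ) :
    mip (∑ i, mip (A i) E • A i - E) T = sensingError B E (symPart T) := by
  have hET : mip E T = mip E (symPart T) := by
    rw [← mip_symPart_left, symPart_eq_self hE]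
  simp only [mip_sub_left, mip_sum_left, mip_smul_left, hA, mip_symPart_left,
    symPart_eq_self hE, hET, sensingError_apply]

theorem frob_sum_smul_sub_mul_le {B A : ι → Matrix n n ℝ} (hA : ∀ i, A i = symPart (B i))
    {E : Matrix n n ℝ} (hE : Eᵀ = E) {c : ℝ}
    (hc : ∀ v, |sensingError B E (vecMulVec v v)| ≤ c * ∑ i, v i ^ 2) (U : Matrix n k ℝ) :
    frob ((∑ i, mip (A i) E • A i) * U - E * U) ≤ c * frob U := by
  rw [← Matrix.sub_mul]
  set G := (∑ i, mip (A i) E • A i - E) * U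
  have hG : frob G ^ 2 ≤ c * frob G * frob U :=
    calc frob G ^ 2 = sensingError B E (symPart (G * Uᵀ)) := by
          rw [frob_sq, mip_mul_right, mip_sum_smul_sub_eq_sensingError hA hE]
      _ ≤ c * frob G * frob U :=
          (le_abs_self _).trans (abs_apply_symPart_mul_transpose_le _ hc G U)
  have hcU : 0 ≤ c * frob U := by
    have h := (abs_nonneg _).trans (abs_apply_mul_transpose_le _ hc U)
    rcases (frob_nonneg U).eq_or_lt with hU | hU
    · simp [← hU]
    · nlinarith
  nlinarith [frob_nonneg G]

end SymmetricMeasurements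

lemma mul_le_half_of_le_div {δ ε C D : ℝ} (hε : 0 ≤ ε) (hC : 0 ≤ C) (hCD : C ≤ D)
    (hδ : δ ≤ ε / (2 * D)) : δ * C ≤ ε / 2 := by
  rcases le_or_gt δ 0 with hδ0 | hδ0
  · nlinarith
  rcases (hC.trans hCD).eq_or_lt with hD | hD
  · rw [← hD] at hCD
    rw [le_antisymm hCD hC]
    linarith
  · rw [le_div_iff₀ (by positivity)] at hδ
    nlinarith

theorem HasRIP.abs_sensingError_sub_vecMulVec_le {ι n : Type*} [Fintype ι] [Fintype n]
    {B : ι → Matrix n n ℝ} {R : ℕ} {δ : ℝ} (hB : HasRIP B R δ) {Y₁ Y₂ : Matrix n n ℝ}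
    (h₁ : Y₁.rank + 1 ≤ R) (h₂ : Y₂.rank + 1 ≤ R) (v : n → ℝ) :
    |sensingError B (Y₁ - Y₂) (vecMulVec v v)| ≤ δ * (frob Y₁ + frob Y₂) * ∑ i, v i ^ 2 := by
  rw [map_sub, LinearMap.sub_apply]
  refine (abs_sub _ _).trans ?_
  linarith [hB.abs_sensingError_vecMulVec_le h₁ v, hB.abs_sensingError_vecMulVec_le h₂ v]

theorem stmt_13_general {N r k M : ℕ} (hk1 : 1 ≤ k) (hkr : k ≤ r)
    (W : Matrix (Fin N) (Fin r) ℝ) (lam : Fin r → ℝ)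
    (X : Matrix (Fin N) (Fin N) ℝ) (hX : X = W * diagonal lam * Wᵀ)
    (L : ℝ)
    (B A : Fin M → Matrix (Fin N) (Fin N) ℝ)
    (hA : ∀ m, A m = ((1 : ℝ) / 2) • (B m + (B m)ᵀ))
    (δ ε : ℝ) (hε : 0 < ε)
    (hRIP : ∀ Z : Matrix (Fin N) (Fin N) ℝ, Z.rank ≤ r + k →
      (1 - δ) * frob Z ^ 2 ≤ ∑ m, mip (B m) Z ^ 2 ∧
      ∑ m, mip (B m) Z ^ 2 ≤ (1 + δ) * frob Z ^ 2)
    (hδ : δ ≤ ε / (2 * Real.sqrt (8 / 7) * (k : ℝ) ^ ((1 : ℝ) / 4) *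
      ((8 / 7) * L + frob X) * Real.sqrt L)) :
    ∀ U : Matrix (Fin N) (Fin k) ℝ, U.rank = k → frob (U * Uᵀ) ≤ (8 / 7) * L →
      frob ((∑ m, mip (A m) (U * Uᵀ - X) • A m) * U - (U * Uᵀ - X) * U) ≤ ε / 2 := by
  intro U _ hUL
  have hXrank : X.rank + 1 ≤ r + k := by
    have := (rank_mul_le_left (W * diagonal lam) Wᵀ).trans
      ((rank_mul_le_left W (diagonal lam)).trans W.rank_le_card_width)
    rw [← hX, Fintype.card_fin] at this
    omega
  have hUrank : (U * Uᵀ).rank + 1 ≤ r + k := by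
    have := (rank_mul_le_left U Uᵀ).trans U.rank_le_card_width
    rw [Fintype.card_fin] at this
    omega
  have hE : (U * Uᵀ - X)ᵀ = U * Uᵀ - X := by
    rw [hX]
    simp [transpose_mul, Matrix.mul_assoc]
  refine (frob_sum_smul_sub_mul_le hA hE
    (HasRIP.abs_sensingError_sub_vecMulVec_le hRIP hUrank hXrank) U).trans ?_
  have hU : frob U ≤ (k : ℝ) ^ ((1 : ℝ) / 4) * (Real.sqrt (8 / 7) * Real.sqrt L) := by
    have := frob_le_rpow_mul_sqrt_frob_mul_transpose U
    rw [Fintype.card_fin] at this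
    rw [← Real.sqrt_mul (by norm_num)]
    exact this.trans (by gcongr)
  have hLX : 0 ≤ (8 / 7) * L + frob X := by linarith [frob_nonneg X, frob_nonneg (U * Uᵀ)]
  rw [mul_assoc]
  exact mul_le_half_of_le_div hε.le
    (mul_nonneg (add_nonneg (frob_nonneg _) (frob_nonneg _)) (frob_nonneg _))
    (mul_le_mul (by linarith) hU (frob_nonneg U) hLX) (hδ.trans_eq (by ring))

theorem stmt_13 {N r k M : ℕ} (hk1 : 1 ≤ k) (hkr : k ≤ r)
    (W : Matrix (Fin N) (Fin r) ℝ) (lam : Fin r → ℝ)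
    (hW : Wᵀ * W = 1) (hpos : ∀ i, 0 < lam i)
    (hdesc : ∀ i j : Fin r, i ≤ j → lam j ≤ lam i)
    (X : Matrix (Fin N) (Fin N) ℝ) (hX : X = W * diagonal lam * Wᵀ)
    (Ustar : Matrix (Fin N) (Fin k) ℝ)
    (hUstar : Ustar = W.submatrix id (Fin.castLE hkr) *
      diagonal (fun j : Fin k => Real.sqrt (lam (Fin.castLE hkr j))))
    (L : ℝ) (hL : L = frob (Ustar * Ustarᵀ))
    (B A : Fin M → Matrix (Fin N) (Fin N) ℝ)
    (hA : ∀ m, A m = ((1 : ℝ) / 2) • (B m + (B m)ᵀ))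
    (δ ε : ℝ) (hε : 0 < ε)
    (hRIP : ∀ Z : Matrix (Fin N) (Fin N) ℝ, Z.rank ≤ r + k →
      (1 - δ) * frob Z ^ 2 ≤ ∑ m, mip (B m) Z ^ 2 ∧
      ∑ m, mip (B m) Z ^ 2 ≤ (1 + δ) * frob Z ^ 2)
    (hδ : δ ≤ ε / (2 * Real.sqrt (8 / 7) * (k : ℝ) ^ ((1 : ℝ) / 4) *
      ((8 / 7) * L + frob X) * Real.sqrt L)) :
    ∀ U : Matrix (Fin N) (Fin k) ℝ, U.rank = k → frob (U * Uᵀ) ≤ (8 / 7) * L →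
      frob ((∑ m, mip (A m) (U * Uᵀ - X) • A m) * U - (U * Uᵀ - X) * U) ≤ ε / 2 :=
  stmt_13_general hk1 hkr W lam X hX L B A hA δ ε hε hRIP hδ
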